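/- Let m > 0, c > 3m, a² = (1-3m/c)/sqrt(1-2m/c), and define u(r)² = r²/((1-2m/r)·ν₊(r)²) for r ≥ c, where ν₊ satisfies ν₊(c)² = c²/((1-3m/c)sqrt(1-2m/c)) and (ν₊²)'(r) = 2r/(1-2m/r)^{3/2}. Then a² ≤ u(r)² ≤ 1 for all r ≥ c. -/

import Mathlib

/-!
Let `φ(r) = r² / ((1 - 3m/r) √(1 - 2m/r))`. It agrees with `ν₊²` at `r = c` and grows no faster,
since `φ'(r) ≤ 2r / (1 - 2m/r)^{3/2}` reduces to `m (2r - 3m) ≥ 0`; hence `φ ≤ ν₊²` on `[c, ∞)`.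
Writing `g = u⁻² = (1 - 2m/r) ν₊² / r²`, one computes `g' = 2 (1/(r √(1 - 2m/r)) - (1 - 3m/r) ν₊² / r³)`,
which is `≤ 0` precisely because `φ ≤ ν₊²`. So `u²` is non-decreasing and `u(r)² ≥ u(c)² = a²`.
Moreover `g ≥ (1 - 2m/r) φ / r² = √(1 - 2m/r) / (1 - 3m/r) ≥ 1`, so `u² ≤ 1`.
-/

open Real Set

theorem monotoneOn_Ici_of_hasDerivAt_nonneg {f f' : ℝ → ℝ} {c : ℝ}
    (hf : ∀ x, c ≤ x → HasDerivAt f (f' x) x) (hf' : ∀ x, c < x → 0 ≤ f' x) :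
    MonotoneOn f (Ici c) :=
  monotoneOn_of_hasDerivWithinAt_nonneg (convex_Ici c)
    (fun x hx => (hf x hx).continuousAt.continuousWithinAt)
    (fun x hx => (hf x (interior_subset hx)).hasDerivWithinAt)
    (fun x hx => hf' x (by rwa [interior_Ici] at hx))

theorem antitoneOn_Ici_of_hasDerivAt_nonpos {f f' : ℝ → ℝ} {c : ℝ}
    (hf : ∀ x, c ≤ x → HasDerivAt f (f' x) x) (hf' : ∀ x, c < x → f' x ≤ 0) :
    AntitoneOn f (Ici c) :=
  antitoneOn_of_hasDerivWithinAt_nonpos (convex_Ici c)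
    (fun x hx => (hf x hx).continuousAt.continuousWithinAt)
    (fun x hx => (hf x (interior_subset hx)).hasDerivWithinAt)
    (fun x hx => hf' x (by rwa [interior_Ici] at hx))

theorem hasDerivAt_one_sub_div (k : ℝ) {x : ℝ} (hx : x ≠ 0) :
    HasDerivAt (fun y => 1 - k / y) (k / x ^ 2) x := by
  simpa [div_eq_mul_inv, neg_div] using ((hasDerivAt_inv hx).const_mul k).const_sub 1

theorem rpow_three_halves {t : ℝ} (ht : 0 ≤ t) : t ^ (3 / 2 : ℝ) = t * √t := by
  rw [show (3 / 2 : ℝ) = 1 + 1 / 2 by norm_num, rpow_add' ht (by norm_num), rpow_one,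
    sqrt_eq_rpow]

namespace OpticalSchwarzschild

variable {m x : ℝ}

/-- The paper's lower bound for `ν₊(r)²`. -/
noncomputable def nuSqLowerBound (m x : ℝ) : ℝ := x ^ 2 / ((1 - 3 * m / x) * √(1 - 2 * m / x))

/-- `u(x)⁻²`, for the warping function `u` of the optical metric. -/
noncomputable def invWarpingSq (m : ℝ) (ν : ℝ → ℝ) (x : ℝ) : ℝ :=
  (1 - 2 * m / x) * ν x ^ 2 / x ^ 2

theorem pos_of_three_mul_lt (hm : 0 ≤ m) (hx : 3 * m < x) :
    0 < x ∧ 0 < 1 - 3 * m / x ∧ 0 < 1 - 2 * m / x := by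
  have hx0 : 0 < x := by linarith
  exact ⟨hx0, sub_pos.2 ((div_lt_one hx0).2 hx), sub_pos.2 ((div_lt_one hx0).2 (by linarith))⟩

theorem hasDerivAt_nuSqLowerBound (hm : 0 ≤ m) (hx : 3 * m < x) :
    HasDerivAt (nuSqLowerBound m)
      ((2 * x * (1 - 3 * m / x) * (1 - 2 * m / x) - 3 * m * (1 - 2 * m / x)
          - m * (1 - 3 * m / x)) /
        ((1 - 3 * m / x) ^ 2 * (1 - 2 * m / x) * √(1 - 2 * m / x))) x := by
  obtain ⟨hx0, hs, ht⟩ := pos_of_three_mul_lt hm hx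
  have hw := sqrt_pos.2 ht
  have hw2 := sq_sqrt ht.le
  have hden := (hasDerivAt_one_sub_div (3 * m) hx0.ne').mul
    ((hasDerivAt_one_sub_div (2 * m) hx0.ne').sqrt ht.ne')
  refine ((hasDerivAt_pow 2 x).div hden (mul_pos hs hw).ne').congr_deriv ?_
  simp only [Pi.mul_apply, Nat.cast_ofNat]
  set w := √(1 - 2 * m / x)
  rw [← hw2]
  field_simp
  ring

theorem nuSqLowerBound_deriv_le (hm : 0 ≤ m) (hx : 3 * m < x) :
    (2 * x * (1 - 3 * m / x) * (1 - 2 * m / x) - 3 * m * (1 - 2 * m / x)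
          - m * (1 - 3 * m / x)) /
        ((1 - 3 * m / x) ^ 2 * (1 - 2 * m / x) * √(1 - 2 * m / x)) ≤
      2 * x / (1 - 2 * m / x) ^ (3 / 2 : ℝ) := by
  obtain ⟨hx0, hs, ht⟩ := pos_of_three_mul_lt hm hx
  have hgap : 2 * x * (1 - 3 * m / x) ^ 2 - (2 * x * (1 - 3 * m / x) * (1 - 2 * m / x)
      - 3 * m * (1 - 2 * m / x) - m * (1 - 3 * m / x)) = m * (2 * x - 3 * m) / x := by
    field_simp
    ring
  have : 0 ≤ m * (2 * x - 3 * m) / x := div_nonneg (mul_nonneg hm (by linarith)) hx0.le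
  have key : 2 * x * (1 - 3 * m / x) * (1 - 2 * m / x) - 3 * m * (1 - 2 * m / x)
      - m * (1 - 3 * m / x) ≤ 2 * x * (1 - 3 * m / x) ^ 2 := by linarith
  rw [rpow_three_halves ht.le, div_le_div_iff₀ (by positivity) (by positivity)]
  calc _ ≤ 2 * x * (1 - 3 * m / x) ^ 2 * ((1 - 2 * m / x) * √(1 - 2 * m / x)) := by gcongr
    _ = _ := by ring

theorem nuSqLowerBound_le_sq {c : ℝ} {ν : ℝ → ℝ} (hm : 0 ≤ m) (hc : 3 * m < c)
    (hν0 : ν c ^ 2 = nuSqLowerBound m c)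
    (hν' : ∀ r, c ≤ r →
      HasDerivAt (fun x => ν x ^ 2) (2 * r / (1 - 2 * m / r) ^ (3 / 2 : ℝ)) r)
    (hx : c ≤ x) : nuSqLowerBound m x ≤ ν x ^ 2 := by
  have hmono : MonotoneOn (fun y => ν y ^ 2 - nuSqLowerBound m y) (Ici c) :=
    monotoneOn_Ici_of_hasDerivAt_nonneg
      (fun y hy => (hν' y hy).sub (hasDerivAt_nuSqLowerBound hm (hc.trans_le hy)))
      (fun y hy => sub_nonneg.2 (nuSqLowerBound_deriv_le hm (hc.trans hy)))
  have := hmono self_mem_Ici hx hx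
  simp only [hν0, sub_self] at this
  linarith

theorem hasDerivAt_invWarpingSq {ν : ℝ → ℝ} (hm : 0 ≤ m) (hx : 3 * m < x)
    (hν : HasDerivAt (fun y => ν y ^ 2) (2 * x / (1 - 2 * m / x) ^ (3 / 2 : ℝ)) x) :
    HasDerivAt (invWarpingSq m ν)
      (2 * (1 / (x * √(1 - 2 * m / x)) - (1 - 3 * m / x) * ν x ^ 2 / x ^ 3)) x := by
  obtain ⟨hx0, -, ht⟩ := pos_of_three_mul_lt hm hx
  have hw := sqrt_pos.2 ht
  have hw2 := sq_sqrt ht.le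
  refine (((hasDerivAt_one_sub_div (2 * m) hx0.ne').mul hν).div (hasDerivAt_pow 2 x)
    (by positivity)).congr_deriv ?_
  rw [rpow_three_halves ht.le]
  simp only [Pi.mul_apply, Nat.cast_ofNat]
  set w := √(1 - 2 * m / x)
  have hwx : w ^ 2 * x = x - 2 * m := by rw [hw2]; field_simp
  rw [← hw2]
  field_simp
  linear_combination (-ν x ^ 2 * w) * hwx

theorem antitoneOn_invWarpingSq {c : ℝ} {ν : ℝ → ℝ} (hm : 0 ≤ m) (hc : 3 * m < c)
    (hν0 : ν c ^ 2 = nuSqLowerBound m c)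
    (hν' : ∀ r, c ≤ r →
      HasDerivAt (fun x => ν x ^ 2) (2 * r / (1 - 2 * m / r) ^ (3 / 2 : ℝ)) r) :
    AntitoneOn (invWarpingSq m ν) (Ici c) := by
  refine antitoneOn_Ici_of_hasDerivAt_nonpos
    (fun x hx => hasDerivAt_invWarpingSq hm (hc.trans_le hx) (hν' x hx)) fun x hx => ?_
  obtain ⟨hx0, hs, ht⟩ := pos_of_three_mul_lt hm (hc.trans hx)
  have hlow := nuSqLowerBound_le_sq hm hc hν0 hν' hx.le
  rw [nuSqLowerBound, div_le_iff₀ (by positivity)] at hlow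
  suffices 1 / (x * √(1 - 2 * m / x)) ≤ (1 - 3 * m / x) * ν x ^ 2 / x ^ 3 by linarith
  rw [div_le_div_iff₀ (by positivity) (by positivity)]
  nlinarith

theorem one_sub_three_mul_div_le_sqrt (hm : 0 ≤ m) (hx : 3 * m < x) :
    1 - 3 * m / x ≤ √(1 - 2 * m / x) := by
  obtain ⟨hx0, -, -⟩ := pos_of_three_mul_lt hm hx
  refine le_sqrt_of_sq_le ?_
  have : 1 - 2 * m / x - (1 - 3 * m / x) ^ 2 = m * (4 * x - 9 * m) / x ^ 2 := by
    field_simp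
    ring
  have : 0 ≤ m * (4 * x - 9 * m) / x ^ 2 :=
    div_nonneg (mul_nonneg hm (by linarith)) (by positivity)
  linarith

theorem mul_nuSqLowerBound_div_sq (hm : 0 ≤ m) (hx : 3 * m < x) :
    (1 - 2 * m / x) * nuSqLowerBound m x / x ^ 2 = √(1 - 2 * m / x) / (1 - 3 * m / x) := by
  obtain ⟨hx0, hs, ht⟩ := pos_of_three_mul_lt hm hx
  rw [nuSqLowerBound]
  nth_rewrite 1 [← sq_sqrt ht.le]
  field_simp

theorem one_le_invWarpingSq {ν : ℝ → ℝ} (hm : 0 ≤ m) (hx : 3 * m < x)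
    (hν : nuSqLowerBound m x ≤ ν x ^ 2) : 1 ≤ invWarpingSq m ν x := by
  obtain ⟨-, hs, ht⟩ := pos_of_three_mul_lt hm hx
  calc 1 ≤ √(1 - 2 * m / x) / (1 - 3 * m / x) :=
        (one_le_div hs).2 (one_sub_three_mul_div_le_sqrt hm hx)
    _ = (1 - 2 * m / x) * nuSqLowerBound m x / x ^ 2 := (mul_nuSqLowerBound_div_sq hm hx).symm
    _ ≤ invWarpingSq m ν x := by unfold invWarpingSq; gcongr

end OpticalSchwarzschild

open OpticalSchwarzschild

/-- Lemma 1 of the paper: with `a² = (1-3m/c)/√(1-2m/c)` and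
`u(r)² = r²/((1-2m/r)·ν₊(r)²)`, where `ν₊(c)² = c²/((1-3m/c)√(1-2m/c))` and
`(ν₊²)'(r) = 2r/(1-2m/r)^{3/2}`, one has `a² ≤ u(r)² ≤ 1` for all `r ≥ c`. -/
theorem warping_function_bounds (m c : ℝ) (hm : 0 < m) (hc : 3 * m < c)
    (ν : ℝ → ℝ)
    (hν0 : (ν c) ^ 2 = c ^ 2 / ((1 - 3 * m / c) * Real.sqrt (1 - 2 * m / c)))
    (hν' : ∀ r : ℝ, c ≤ r →
      HasDerivAt (fun x => (ν x) ^ 2) (2 * r / (1 - 2 * m / r) ^ ((3:ℝ)/2)) r)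
    (r : ℝ) (hr : c ≤ r) :
    (1 - 3 * m / c) / Real.sqrt (1 - 2 * m / c) ≤ r ^ 2 / ((1 - 2 * m / r) * (ν r) ^ 2) ∧
      r ^ 2 / ((1 - 2 * m / r) * (ν r) ^ 2) ≤ 1 := by
  have hlow := nuSqLowerBound_le_sq hm.le hc hν0 hν' hr
  have hone := one_le_invWarpingSq hm.le (hc.trans_le hr) hlow
  have hgc : invWarpingSq m ν c = √(1 - 2 * m / c) / (1 - 3 * m / c) := by
    rw [invWarpingSq, hν0, ← mul_nuSqLowerBound_div_sq hm.le hc, nuSqLowerBound]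
  have hu : r ^ 2 / ((1 - 2 * m / r) * ν r ^ 2) = (invWarpingSq m ν r)⁻¹ := (inv_div _ _).symm
  rw [← inv_div, ← hgc, hu]
  exact ⟨inv_anti₀ (one_pos.trans_le hone)
      (antitoneOn_invWarpingSq hm.le hc hν0 hν' self_mem_Ici hr hr),
    inv_le_one_of_one_le₀ hone⟩
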